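/- Consider the set system D = (V, S) where |V| = 3 and S = { X ⊆ V : |X| ≠ 1 }. Then D is a delta-matroid, D is connected (not a direct sum of two set systems with nonempty ground sets), D is not even, and D admits no full lc-sequence: there is no sequence (v₁,…,v_k) of distinct elements with all initial segments {v₁,…,v_i} ∈ S and {v₁,…,v_k} maximal in S (because S contains no singletons while V ∈ S is the unique maximal member and |V| = 3 > 0 forces a first step through a singleton). -/
import Mathlib


variable {U : Type*} [DecidableEq U]

/-- A set system: a finite ground set together with a family of subsets. -/
structure SetSystem (U : Type*) [DecidableEq U] where
  ground : Finset U
  sets : Set (Finset U)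

/-- Delta-matroid: `S` nonempty and the symmetric exchange axiom holds. -/
def IsDeltaMatroid (D : SetSystem U) : Prop :=
  D.sets.Nonempty ∧
  ∀ X ∈ D.sets, ∀ Y ∈ D.sets, ∀ x ∈ symmDiff X Y,
    ∃ y ∈ symmDiff X Y, symmDiff X {x, y} ∈ D.sets

/-- The direct sum of two set systems (to be used with disjoint ground sets). -/
def SetSystem.directSum (D₁ D₂ : SetSystem U) : SetSystem U :=
  ⟨D₁.ground ∪ D₂.ground, {Z | ∃ X₁ ∈ D₁.sets, ∃ X₂ ∈ D₂.sets, Z = X₁ ∪ X₂}⟩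

/-- A set system is even if all its members have cardinalities of equal parity. -/
def SetSystem.IsEven (D : SetSystem U) : Prop :=
  ∀ X ∈ D.sets, ∀ Y ∈ D.sets, (Even X.card ↔ Even Y.card)

/-- A set system is connected if it is not the direct sum of two set systems with
nonempty (disjoint) ground sets. -/
def SetSystem.IsConnected (D : SetSystem U) : Prop :=
  ¬ ∃ D₁ D₂ : SetSystem U, D₁.ground.Nonempty ∧ D₂.ground.Nonempty ∧
      Disjoint D₁.ground D₂.ground ∧
      (∀ Z ∈ D₁.sets, Z ⊆ D₁.ground) ∧ (∀ Z ∈ D₂.sets, Z ⊆ D₂.ground) ∧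
      D = D₁.directSum D₂

/-- The set system `D = (V, S)` with `|V| = 3` and `S = {X ⊆ V : |X| ≠ 1}`. -/
def Dex : SetSystem (Fin 3) :=
  ⟨Finset.univ, {X | X.card ≠ 1}⟩

/-- The set system `D = (V, {X ⊆ V : |X| ≠ 1})` with `|V| = 3` is a delta-matroid,
is connected, is not even, and admits no full lc-sequence (no sequence of distinct
elements with all initial segments in `S` ending in a maximal member of `S`). -/
theorem counterexample_delta_matroid :
    IsDeltaMatroid Dex ∧ Dex.IsConnected ∧ ¬ Dex.IsEven ∧
    ¬ ∃ σ : List (Fin 3), σ.Nodup ∧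
        (∀ i ≤ σ.length, (σ.take i).toFinset ∈ Dex.sets) ∧
        σ.toFinset ∈ Dex.sets ∧
        ∀ Y ∈ Dex.sets, σ.toFinset ⊆ Y → Y = σ.toFinset := by
  refine ⟨⟨⟨∅, by simp [Dex]⟩, ?_⟩, ?_, ?_, ?_⟩
  · intro X hX Y hY x hx
    simp only [Dex, Set.mem_setOf_eq] at *
    revert hX hY hx
    revert X Y x
    decide
  · rintro ⟨D₁, D₂, ⟨a, ha⟩, ⟨b, hb⟩, hdisj, hs₁, hs₂, heq⟩
    have hsets : Dex.sets = {Z | ∃ X₁ ∈ D₁.sets, ∃ X₂ ∈ D₂.sets, Z = X₁ ∪ X₂} := by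
      rw [heq]; rfl
    have hg : (Finset.univ : Finset (Fin 3)) = D₁.ground ∪ D₂.ground := by
      have := congrArg SetSystem.ground heq; exact this
    -- ∅ ∈ sets of both
    have h0 : (∅ : Finset (Fin 3)) ∈ Dex.sets := by simp [Dex]
    rw [hsets] at h0
    obtain ⟨X₁, hX₁, X₂, hX₂, h0⟩ := h0
    have e1 : X₁ = ∅ := by
      have := Finset.union_eq_empty.mp h0.symm; exact this.1
    have e2 : X₂ = ∅ := by
      have := Finset.union_eq_empty.mp h0.symm; exact this.2
    subst e1; subst e2
    -- univ ∈ sets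
    have hu : (Finset.univ : Finset (Fin 3)) ∈ Dex.sets := by simp [Dex]
    rw [hsets] at hu
    obtain ⟨Y₁, hY₁, Y₂, hY₂, hu⟩ := hu
    have hg1 : Y₁ = D₁.ground := by
      apply Finset.Subset.antisymm (hs₁ _ hY₁)
      intro v hv
      have hvu : v ∈ Y₁ ∪ Y₂ := by rw [← hu]; exact Finset.mem_univ v
      rcases Finset.mem_union.mp hvu with h | h
      · exact h
      · exact absurd hv (Finset.disjoint_right.mp hdisj (hs₂ _ hY₂ h))
    have hg2 : Y₂ = D₂.ground := by
      apply Finset.Subset.antisymm (hs₂ _ hY₂)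
      intro v hv
      have hvu : v ∈ Y₁ ∪ Y₂ := by rw [← hu]; exact Finset.mem_univ v
      rcases Finset.mem_union.mp hvu with h | h
      · exact absurd (hs₁ _ hY₁ h) (Finset.disjoint_right.mp hdisj hv)
      · exact h
    -- g₁ ∈ S, g₂ ∈ S
    have hs1 : D₁.ground ∈ Dex.sets := by
      rw [hsets]; exact ⟨Y₁, hY₁, ∅, hX₂, by simp [hg1]⟩
    have hs2 : D₂.ground ∈ Dex.sets := by
      rw [hsets]; exact ⟨∅, hX₁, Y₂, hY₂, by simp [hg2]⟩
    have hc1 : D₁.ground.card ≠ 1 := hs1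
    have hc2 : D₂.ground.card ≠ 1 := hs2
    have hcard : D₁.ground.card + D₂.ground.card = 3 := by
      rw [← Finset.card_union_of_disjoint hdisj, ← hg]; simp
    have h1 : 1 ≤ D₁.ground.card := Finset.card_pos.mpr ⟨a, ha⟩
    have h2 : 1 ≤ D₂.ground.card := Finset.card_pos.mpr ⟨b, hb⟩
    omega
  · intro h
    have := h ∅ (by simp [Dex]) Finset.univ (by simp [Dex])
    simp at this
    exact absurd this (by decide)
  · rintro ⟨σ, hnd, hinit, hmem, hmax⟩
    have huniv : (Finset.univ : Finset (Fin 3)) = σ.toFinset :=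
      hmax _ (by simp [Dex]) (Finset.subset_univ _)
    have hlen : σ.length = 3 := by
      have := List.toFinset_card_of_nodup hnd
      rw [← huniv] at this
      simpa using this.symm
    have h1 := hinit 1 (by omega)
    have : (σ.take 1).toFinset.card = 1 := by
      rw [List.toFinset_card_of_nodup (hnd.sublist (List.take_sublist _ _))]
      simp [hlen]
    exact h1 this
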